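/- Let Z be a ℂˣ-invariant vector field on the trivial principal ℂˣ-bundle L^× = ℂˣ × ℝ^{2k}, written Z(b, x) = (2πi·κ(x)·b, X(x)) with κ ∈ C^∞(ℝ^{2k}, ℂ) and X : ℝ^{2k} → ℝ^{2k} smooth. Then Z preserves the connection 1-form β, i.e. L_Z β = d(β(Z)) + Z ⌟ dβ = 0, if and only if there exists f ∈ C^∞(ℝ^{2k}, ℂ) such that Df(x) = −ω(X(x), ·) for all x (so X is the Hamiltonian vector field of f) and κ = (α(X) − f)/h; equivalently, if and only if Z = lift X_f − Y_{f/h}, where lift X(b,x) = ((2πi/h)·α(X)(x)·b, X(x)) is the horizontal lift and Y_c(b,x) = (2πi·c(x)·b, 0) is the vertical field generated by c. Moreover, in that case f is determined by f = α(X) − h·κ. -/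

import Mathlib

noncomputable section

/-- The model phase space `ℝ^{2k} = ℝ^k × ℝ^k` with coordinates `(j, ϑ)`. -/
abbrev Phase (k : ℕ) : Type := (Fin k → ℝ) × (Fin k → ℝ)

/-- The Liouville 1-form `α = Σᵢ jᵢ dϑᵢ` at `x` evaluated on a tangent vector `v`. -/
def liouv {k : ℕ} (x v : Phase k) : ℝ := ∑ i, x.1 i * v.2 i

/-- The standard symplectic form `ω((a,b),(c,d)) = ⟨a,d⟩ − ⟨b,c⟩` (i.e. `ω = Σᵢ djᵢ ∧ dϑᵢ`). -/
def omega {k : ℕ} (u v : Phase k) : ℝ := (∑ i, u.1 i * v.2 i) - ∑ i, u.2 i * v.1 i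

/-- The connection 1-form `β_{(b,x)}(w,v) = (1/(2πi))·(w/b) − (1/h)·α(x)(v)` on the
trivialized principal bundle `ℂˣ × ℝ^{2k}`. -/
noncomputable def betaForm {k : ℕ} (h : ℝ) (p : ℂ × Phase k) (w : ℂ × Phase k) : ℂ :=
  (1 / (2 * ((Real.pi : ℝ) : ℂ) * Complex.I)) * (w.1 / p.1)
    - (1 / (h : ℂ)) * ((liouv p.2 w.2 : ℝ) : ℂ)

/-- The ℂˣ-invariant vector field `Z(b,x) = (2πi·κ(x)·b, X(x))` on `ℂˣ × ℝ^{2k}`. -/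
noncomputable def Zfield {k : ℕ} (κ : Phase k → ℂ) (X : Phase k → Phase k)
    (p : ℂ × Phase k) : ℂ × Phase k :=
  (2 * ((Real.pi : ℝ) : ℂ) * Complex.I * κ p.2 * p.1, X p.2)

/-- The exterior derivative of `β` evaluated on (constant) tangent vectors `u`, `v`:
`dβ(p)(u,v) = D(β(·)(v))(p)(u) − D(β(·)(u))(p)(v)`. -/
noncomputable def dBeta {k : ℕ} (h : ℝ) (p : ℂ × Phase k) (u v : ℂ × Phase k) : ℂ :=
  fderiv ℝ (fun q => betaForm h q v) p u - fderiv ℝ (fun q => betaForm h q u) p v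

/-- The Lie derivative `L_Z β = d(β(Z)) + Z ⌟ dβ`, evaluated at `p` on `v`. -/
noncomputable def lieDerBeta {k : ℕ} (h : ℝ) (κ : Phase k → ℂ) (X : Phase k → Phase k)
    (p : ℂ × Phase k) (v : ℂ × Phase k) : ℂ :=
  fderiv ℝ (fun q => betaForm h q (Zfield κ X q)) p v + dBeta h p (Zfield κ X p) v

end

noncomputable section Aux

open ContinuousLinearMap

lemma twoPiI_ne : (2 * ((Real.pi : ℝ) : ℂ) * Complex.I) ≠ 0 := by
  simp [Real.pi_ne_zero, Complex.I_ne_zero]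

lemma omega_eq {k : ℕ} (u v : Phase k) : omega u v = liouv u v - liouv v u := by
  simp only [omega, liouv]
  congr 1
  exact Finset.sum_congr rfl fun i _ => mul_comm _ _

/-- the linear map `q ↦ (liouv q.2 w : ℂ)` as a CLM. -/
noncomputable def liouvL {k : ℕ} (w : Phase k) : (ℂ × Phase k) →L[ℝ] ℂ :=
  ∑ i, (w.2 i) • (Complex.ofRealCLM.comp ((ContinuousLinearMap.proj i).comp
    ((ContinuousLinearMap.fst ℝ (Fin k → ℝ) (Fin k → ℝ)).comp
      (ContinuousLinearMap.snd ℝ ℂ (Phase k)))))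

lemma liouvL_apply {k : ℕ} (w : Phase k) (q : ℂ × Phase k) :
    liouvL w q = ((liouv q.2 w : ℝ) : ℂ) := by
  simp only [liouvL, liouv, ContinuousLinearMap.sum_apply, ContinuousLinearMap.smul_apply,
    ContinuousLinearMap.comp_apply, ContinuousLinearMap.proj_apply,
    ContinuousLinearMap.coe_fst', ContinuousLinearMap.coe_snd', Complex.ofRealCLM_apply]
  push_cast
  exact Finset.sum_congr rfl fun i _ => by
    rw [Complex.real_smul, mul_comm]

lemma fderiv_beta_apply {k : ℕ} (h : ℝ) (v p u : ℂ × Phase k) (hp : p.1 ≠ 0) :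
    fderiv ℝ (fun q => betaForm h q v) p u
      = (1 / (2 * ((Real.pi : ℝ) : ℂ) * Complex.I)) * v.1 * (u.1 * (-(p.1 ^ 2)⁻¹))
        - (1 / (h : ℂ)) * ((liouv u.2 v.2 : ℝ) : ℂ) := by
  have h1 : HasFDerivAt (fun q : ℂ × Phase k => (q.1)⁻¹)
      ((((1 : ℂ →L[ℂ] ℂ).smulRight (-(p.1 ^ 2)⁻¹)).restrictScalars ℝ).comp
        (ContinuousLinearMap.fst ℝ ℂ (Phase k))) p :=
    ((hasDerivAt_inv hp).hasFDerivAt.restrictScalars ℝ).comp p (hasFDerivAt_fst)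
  have h2 := h1.const_mul ((1 / (2 * ((Real.pi : ℝ) : ℂ) * Complex.I)) * v.1)
  have h3 : HasFDerivAt (fun q : ℂ × Phase k => ((liouv q.2 v.2 : ℝ) : ℂ)) (liouvL v.2) p := by
    have heq : (fun q : ℂ × Phase k => ((liouv q.2 v.2 : ℝ) : ℂ)) = ⇑(liouvL v.2) := by
      funext q; rw [liouvL_apply]
    rw [heq]
    exact (liouvL v.2).hasFDerivAt
  have h4 := h2.sub (h3.const_mul (1 / (h : ℂ)))
  have h5 : (fun q : ℂ × Phase k => betaForm h q v)
      = fun q : ℂ × Phase k =>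
        (1 / (2 * ((Real.pi : ℝ) : ℂ) * Complex.I)) * v.1 * (q.1)⁻¹
          - (1 / (h : ℂ)) * ((liouv q.2 v.2 : ℝ) : ℂ) := by
    funext q; simp only [betaForm]; ring
  rw [h5, HasFDerivAt.fderiv (f := fun q : ℂ × Phase k => (1 / (2 * ((Real.pi : ℝ) : ℂ) * Complex.I)) * v.1 * (q.1)⁻¹
          - (1 / (h : ℂ)) * ((liouv q.2 v.2 : ℝ) : ℂ)) h4]
  simp [liouvL_apply, smul_eq_mul]

lemma dBeta_eq {k : ℕ} (h : ℝ) (p u v : ℂ × Phase k) (hp : p.1 ≠ 0) :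
    dBeta h p u v
      = (1 / (h : ℂ)) * (((liouv v.2 u.2 : ℝ) : ℂ) - ((liouv u.2 v.2 : ℝ) : ℂ)) := by
  rw [dBeta, fderiv_beta_apply h v p u hp, fderiv_beta_apply h u p v hp]
  ring

lemma betaZ_eq {k : ℕ} (h : ℝ) (κ : Phase k → ℂ) (X : Phase k → Phase k)
    (q : ℂ × Phase k) (hq : q.1 ≠ 0) :
    betaForm h q (Zfield κ X q)
      = κ q.2 - (1 / (h : ℂ)) * ((liouv q.2 (X q.2) : ℝ) : ℂ) := by
  simp only [betaForm, Zfield]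
  rw [mul_div_assoc, div_self hq, mul_one, one_div, inv_mul_cancel_left₀ twoPiI_ne]

lemma contDiff_A {k : ℕ} (X : Phase k → Phase k) (hX : ContDiff ℝ (⊤ : ℕ∞) X) :
    ContDiff ℝ (⊤ : ℕ∞) (fun x : Phase k => ((liouv x (X x) : ℝ) : ℂ)) := by
  have hA : ContDiff ℝ (⊤ : ℕ∞) (fun x : Phase k => liouv x (X x)) := by
    simp only [liouv]
    apply ContDiff.sum
    intro i _
    have h1 : ContDiff ℝ (⊤ : ℕ∞) (fun x : Phase k => x.1 i) := by fun_prop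
    have h2 : ContDiff ℝ (⊤ : ℕ∞) (fun x : Phase k => (X x).2 i) := by fun_prop
    exact h1.mul h2
  exact Complex.ofRealCLM.contDiff.comp hA

/-- Main formula for the Lie derivative. -/
lemma lieDer_formula {k : ℕ} (h : ℝ) (κ : Phase k → ℂ) (X : Phase k → Phase k)
    (G : Phase k → ℂ)
    (hG : G = fun x => κ x - (1 / (h : ℂ)) * ((liouv x (X x) : ℝ) : ℂ))
    (p v : ℂ × Phase k) (hGd : DifferentiableAt ℝ G p.2) (hp : p.1 ≠ 0) :
    lieDerBeta h κ X p v
      = fderiv ℝ G p.2 v.2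
        + (1 / (h : ℂ)) * (((liouv v.2 (X p.2) : ℝ) : ℂ) - ((liouv (X p.2) v.2 : ℝ) : ℂ)) := by
  have hopen : {q : ℂ × Phase k | q.1 ≠ 0} ∈ nhds p :=
    (isOpen_compl_singleton.preimage continuous_fst).mem_nhds hp
  have heq : (fun q : ℂ × Phase k => betaForm h q (Zfield κ X q)) =ᶠ[nhds p]
      (fun q : ℂ × Phase k => G q.2) :=
    Filter.eventuallyEq_of_mem hopen (fun q hq => by
      rw [betaZ_eq h κ X q hq, hG])
  have hfd : fderiv ℝ (fun q : ℂ × Phase k => betaForm h q (Zfield κ X q)) p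
      = fderiv ℝ (fun q : ℂ × Phase k => G q.2) p := heq.fderiv_eq
  have hcomp : HasFDerivAt (fun q : ℂ × Phase k => G q.2)
      ((fderiv ℝ G p.2).comp (ContinuousLinearMap.snd ℝ ℂ (Phase k))) p :=
    (hGd.hasFDerivAt).comp p hasFDerivAt_snd
  rw [lieDerBeta, hfd, hcomp.fderiv, dBeta_eq h p _ v hp]
  simp [Zfield]

end Aux

/-- a ℂˣ-invariant vector field `Z(b,x) = (2πi·κ(x)·b, X(x))` on
`ℂˣ × ℝ^{2k}` preserves the connection 1-form `β` (`L_Z β = d(β(Z)) + Z ⌟ dβ = 0`)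
iff there is `f ∈ C^∞(ℝ^{2k}, ℂ)` with `Df = −ω(X, ·)` (so `X = X_f`) and
`κ = (α(X) − f)/h`; moreover such an `f` is determined by `f = α(X) − h·κ`. -/
theorem invariant_field_preserves_connection_iff
    (k : ℕ) (h : ℝ) (hh : 0 < h)
    (κ : Phase k → ℂ) (hκ : ContDiff ℝ (⊤ : ℕ∞) κ)
    (X : Phase k → Phase k) (hX : ContDiff ℝ (⊤ : ℕ∞) X) :
    ((∀ p : ℂ × Phase k, p.1 ≠ 0 → ∀ v : ℂ × Phase k, lieDerBeta h κ X p v = 0)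
      ↔
      (∃ f : Phase k → ℂ, ContDiff ℝ (⊤ : ℕ∞) f ∧
        (∀ (x : Phase k) (v : Phase k), fderiv ℝ f x v = -((omega (X x) v : ℝ) : ℂ)) ∧
        (∀ x : Phase k, κ x = (((liouv x (X x) : ℝ) : ℂ) - f x) / (h : ℂ))))
    ∧
    (∀ f : Phase k → ℂ, ContDiff ℝ (⊤ : ℕ∞) f →
      (∀ (x : Phase k) (v : Phase k), fderiv ℝ f x v = -((omega (X x) v : ℝ) : ℂ)) →
      (∀ x : Phase k, κ x = (((liouv x (X x) : ℝ) : ℂ) - f x) / (h : ℂ)) →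
      ∀ x : Phase k, f x = ((liouv x (X x) : ℝ) : ℂ) - (h : ℂ) * κ x) := by
  have hhne : h ≠ 0 := ne_of_gt hh
  have hhC : (h : ℂ) ≠ 0 := by exact_mod_cast hhne
  set G : Phase k → ℂ := fun x => κ x - (1 / (h : ℂ)) * ((liouv x (X x) : ℝ) : ℂ) with hGdef
  set f₀ : Phase k → ℂ := fun x => ((liouv x (X x) : ℝ) : ℂ) - (h : ℂ) * κ x with hf₀def
  have hf₀sm : ContDiff ℝ (⊤ : ℕ∞) f₀ := (contDiff_A X hX).sub (contDiff_const.mul hκ)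
  have hGf : G = fun x => (-(1 / (h : ℂ))) * f₀ x := by
    funext x
    simp only [hGdef, hf₀def]
    field_simp
    ring
  have hGd : Differentiable ℝ G := by
    rw [hGf]
    exact fun x => ((hf₀sm.differentiable (by simp)) x).const_mul _
  have hGfd : ∀ (x : Phase k) (w : Phase k),
      fderiv ℝ G x w = (-(1 / (h : ℂ))) * fderiv ℝ f₀ x w := by
    intro x w
    rw [hGf, fderiv_const_mul ((hf₀sm.differentiable (by simp)) x)]
    simp
  refine ⟨⟨fun H => ?_, fun ⟨f, hf, hdf, hκf⟩ => ?_⟩, fun f hf hdf hκf x => ?_⟩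
  · refine ⟨f₀, hf₀sm, ?_, ?_⟩
    · intro x w
      have hform := lieDer_formula h κ X G hGdef ((1 : ℂ), x) ((0 : ℂ), w)
        (hGd x) (by norm_num)
      have H0 := H ((1 : ℂ), x) (by norm_num) ((0 : ℂ), w)
      rw [hform] at H0
      have H0 : fderiv ℝ G x w
          + (1 / (h : ℂ)) * (((liouv w (X x) : ℝ) : ℂ) - ((liouv (X x) w : ℝ) : ℂ)) = 0 := H0
      have e1 : fderiv ℝ G x w
          = -((1 / (h : ℂ)) * (((liouv w (X x) : ℝ) : ℂ) - ((liouv (X x) w : ℝ) : ℂ))) :=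
        eq_neg_of_add_eq_zero_left H0
      rw [hGfd x w] at e1
      have e2 : fderiv ℝ f₀ x w
          = ((liouv w (X x) : ℝ) : ℂ) - ((liouv (X x) w : ℝ) : ℂ) := by
        have hc : (-(1 / (h : ℂ))) ≠ 0 := by simp [hhC]
        apply mul_left_cancel₀ hc
        rw [e1]; ring
      rw [e2, omega_eq]
      push_cast
      ring
    · intro x
      simp only [hf₀def]
      field_simp
      ring
  · intro p hp v
    have hGf' : G = fun x => (-(1 / (h : ℂ))) * f x := by
      funext x
      simp only [hGdef, hκf x]
      field_simp
      ring
    have hGd' : DifferentiableAt ℝ G p.2 := hGd p.2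
    rw [lieDer_formula h κ X G hGdef p v hGd' hp]
    have e3 : fderiv ℝ G p.2 v.2 = (-(1 / (h : ℂ))) * fderiv ℝ f p.2 v.2 := by
      rw [hGf', fderiv_const_mul ((hf.differentiable (by simp)) p.2)]
      simp
    rw [e3, hdf p.2 v.2, omega_eq]
    push_cast
    ring
  · rw [hκf x]
    field_simp
    ring
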